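/- arXiv:2405.08379 — 2 statements merged into one kernel-verified Lean document; each statement's English description precedes it below -/
import Mathlib

section
/- Let p, q be positive integers and ξ ∈ ℝ^q. Set n₀ = p and n_j = ⌈n_{j−1}/2⌉ for j ∈ [q]. Let G be the group of bijections of ℝ^{p×q} generated by (a) all row permutations M ↦ (M_{σ⁻¹(i), j})_{i,j} for permutations σ of [p], and (b) for each column j ∈ [q], the column reflection replacing M_{i,j} by 2ξ_j − M_{i,j} for all i ∈ [p] and leaving all other entries unchanged. Then for every matrix M ∈ ℝ^{p×q} there exists g ∈ G such that N = g(M) satisfies: (i) N_{i,j} ≥ ξ_j for every j ∈ [q] and every i ∈ [n_j]; and (ii) within each of the row-index blocks {1,…,n_q} and {n_j + 1,…,n_{j−1}} for j ∈ [q], the rows of N are lexicographically nonincreasing, i.e., N_{i,·} ≥lex N_{i+1,·} for all consecutive indices i, i+1 in the same block. -/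
/-- Lexicographic comparison `u ≥lex v`: either `u = v`, or `u_k > v_k` at the
smallest index `k` with `u_k ≠ v_k`. -/
def geLex {ι : Type*} [LinearOrder ι] (u v : ι → ℝ) : Prop :=
  u = v ∨ ∃ k, (∀ l, l < k → u l = v l) ∧ v k < u k

/-- The row permutation `M ↦ (M_{σ⁻¹(i), j})_{i,j}` as a bijection of `ℝ^{p×q}`. -/
def rowPermEquiv (p q : ℕ) (σ : Equiv.Perm (Fin p)) :
    Equiv.Perm (Matrix (Fin p) (Fin q) ℝ) where
  toFun M := Matrix.of fun i j => M (σ.symm i) j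
  invFun M := Matrix.of fun i j => M (σ i) j
  left_inv M := by
    funext i j
    simp [Matrix.of_apply]
  right_inv M := by
    funext i j
    simp [Matrix.of_apply]

/-- The reflection of column `j₀` at center `ξ_{j₀}`, replacing `M_{i,j₀}` by
`2ξ_{j₀} − M_{i,j₀}`, as a bijection of `ℝ^{p×q}`. -/
noncomputable def colReflEquiv (p q : ℕ) (ξ : Fin q → ℝ) (j₀ : Fin q) :
    Equiv.Perm (Matrix (Fin p) (Fin q) ℝ) where
  toFun M := Matrix.of fun i j => if j = j₀ then 2 * ξ j₀ - M i j else M i j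
  invFun M := Matrix.of fun i j => if j = j₀ then 2 * ξ j₀ - M i j else M i j
  left_inv M := by
    funext i j
    by_cases h : j = j₀ <;> simp [Matrix.of_apply, h]
  right_inv M := by
    funext i j
    by_cases h : j = j₀ <;> simp [Matrix.of_apply, h]

/-- The sequence `n₀ = p`, `n_j = ⌈n_{j−1} / 2⌉`. -/
def halveSeq (p : ℕ) : ℕ → ℕ
  | 0 => p
  | j + 1 => (halveSeq p j + 1) / 2

open Finset

lemma halveSeq_antitone (p : ℕ) : Antitone (halveSeq p) :=
  antitone_nat_of_succ_le fun j => by show (halveSeq p j + 1) / 2 ≤ halveSeq p j; omega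

lemma halveSeq_le (p j : ℕ) : halveSeq p j ≤ p := halveSeq_antitone p (Nat.zero_le j)

lemma card_filter_lt (p m : ℕ) (hm : m ≤ p) :
    (Finset.univ.filter fun i : Fin p => (i : ℕ) < m).card = m := by
  refine Finset.card_eq_of_bijective (fun i hi => ⟨i, lt_of_lt_of_le hi hm⟩) ?_ ?_ ?_
  · intro a ha
    exact ⟨a, (Finset.mem_filter.mp ha).2, rfl⟩
  · intro i hi
    simp [hi]
  · intro i j hi hj hij
    simpa using congrArg Fin.val hij

lemma sort_block {δ : Type*} [LinearOrder δ] {p : ℕ} (χ : ℕ → ℕ) (hχ : Monotone χ)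
    (w : Fin p → δ) :
    ∃ σ : Equiv.Perm (Fin p),
      (∀ i : Fin p, χ ((σ i : Fin p) : ℕ) = χ (i : ℕ)) ∧
      (∀ a b : Fin p, a ≤ b → χ ((σ a : Fin p) : ℕ) = χ ((σ b : Fin p) : ℕ) →
        w (σ b) ≤ w (σ a)) := by
  classical
  set κ : Fin p → ℕ ×ₗ δᵒᵈ := fun i => toLex ((χ (i : ℕ), OrderDual.toDual (w i))) with hκ
  set σ := Tuple.sort κ with hσ
  have hmono : Monotone (κ ∘ σ) := Tuple.monotone_sort κ
  have hfst : Monotone ((fun i : Fin p => χ (i : ℕ)) ∘ σ) := by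
    intro a b hab
    have h := hmono hab
    rcases Prod.Lex.le_iff.mp h with h | h
    · exact h.le
    · exact h.1.le
  have huniq : (fun i : Fin p => χ (i : ℕ)) ∘ σ
      = (fun i : Fin p => χ (i : ℕ)) ∘ (1 : Equiv.Perm (Fin p)) := by
    refine Tuple.unique_monotone hfst ?_
    have : Monotone (fun i : Fin p => χ (i : ℕ)) := fun a b hab => hχ hab
    simpa using this
  refine ⟨σ, fun i => congrFun huniq i, ?_⟩
  intro a b hab heq
  have h := hmono hab
  rcases Prod.Lex.le_iff.mp h with h | h
  · exact absurd heq (ne_of_lt h)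
  · exact h.2

noncomputable def lexLO (q : ℕ) : LinearOrder (Lex (Fin q → ℝ)) :=
  @Pi.Lex.linearOrder (Fin q) (fun _ => ℝ) inferInstance
    (inferInstance : WellFoundedLT (Fin q)) (fun _ => inferInstance)

section Main

variable {p q : ℕ} {ξ : Fin q → ℝ}

/-- Reachability within the symmetry group. -/
def Reach (p q : ℕ) (ξ : Fin q → ℝ) (M N : Matrix (Fin p) (Fin q) ℝ) : Prop :=
  ∃ g ∈ Subgroup.closure
      (Set.range (rowPermEquiv p q) ∪ Set.range (colReflEquiv p q ξ)), g M = N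

lemma reach_refl (M : Matrix (Fin p) (Fin q) ℝ) : Reach p q ξ M M :=
  ⟨1, one_mem _, rfl⟩

lemma reach_trans {M N P : Matrix (Fin p) (Fin q) ℝ}
    (h1 : Reach p q ξ M N) (h2 : Reach p q ξ N P) : Reach p q ξ M P := by
  obtain ⟨g, hg, rfl⟩ := h1
  obtain ⟨g', hg', rfl⟩ := h2
  exact ⟨g' * g, mul_mem hg' hg, rfl⟩

lemma reach_rowPerm (M : Matrix (Fin p) (Fin q) ℝ) (σ : Equiv.Perm (Fin p)) :
    Reach p q ξ M (rowPermEquiv p q σ M) :=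
  ⟨rowPermEquiv p q σ, Subgroup.subset_closure (Or.inl ⟨σ, rfl⟩), rfl⟩

lemma reach_colRefl (M : Matrix (Fin p) (Fin q) ℝ) (j : Fin q) :
    Reach p q ξ M (colReflEquiv p q ξ j M) :=
  ⟨colReflEquiv p q ξ j, Subgroup.subset_closure (Or.inr ⟨j, rfl⟩), rfl⟩

lemma stepA (p q : ℕ) (ξ : Fin q → ℝ) (M : Matrix (Fin p) (Fin q) ℝ) (j : ℕ) (hj : j ≤ q) :
    ∃ N, Reach p q ξ M N ∧
      ∀ j' : Fin q, (j' : ℕ) < j →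
        ∀ i : Fin p, (i : ℕ) < halveSeq p ((j' : ℕ) + 1) → ξ j' ≤ N i j' := by
  classical
  induction j with
  | zero => exact ⟨M, reach_refl M, fun j' hj' => absurd hj' (Nat.not_lt_zero _)⟩
  | succ j ih =>
    obtain ⟨N, hNr, hN⟩ := ih (Nat.le_of_succ_le hj)
    set J : Fin q := ⟨j, hj⟩ with hJ
    set m := halveSeq p j with hm
    set t := halveSeq p (j + 1) with htdef
    have ht : t = (m + 1) / 2 := rfl
    -- Step 1: reflect column J if necessary
    have key : ∃ N₁, Reach p q ξ M N₁ ∧ (∀ (i : Fin p) (j' : Fin q), j' ≠ J → N₁ i j' = N i j')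
        ∧ t ≤ (Finset.univ.filter fun i : Fin p => (i : ℕ) < m ∧ ξ J ≤ N₁ i J).card := by
      by_cases hA : t ≤ (Finset.univ.filter fun i : Fin p => (i : ℕ) < m ∧ ξ J ≤ N i J).card
      · exact ⟨N, hNr, fun _ _ _ => rfl, hA⟩
      · refine ⟨colReflEquiv p q ξ J N, reach_trans hNr (reach_colRefl N J), ?_, ?_⟩
        · intro i j' hne
          show (if j' = J then 2 * ξ J - N i j' else N i j') = N i j'
          simp [hne]
        · have hval : ∀ i : Fin p, colReflEquiv p q ξ J N i J = 2 * ξ J - N i J := by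
            intro i; show (if J = J then 2 * ξ J - N i J else N i J) = _; simp
          have hflt : (Finset.univ.filter fun i : Fin p =>
              (i : ℕ) < m ∧ ξ J ≤ colReflEquiv p q ξ J N i J)
              = (Finset.univ.filter fun i : Fin p => (i : ℕ) < m ∧ N i J ≤ ξ J) := by
            apply Finset.filter_congr
            intro x _
            rw [hval x]
            exact and_congr_right fun _ => by constructor <;> intro <;> linarith
          rw [hflt]
          have hsub : (Finset.univ.filter fun i : Fin p => (i : ℕ) < m)
              ⊆ (Finset.univ.filter fun i : Fin p => (i : ℕ) < m ∧ ξ J ≤ N i J)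
                ∪ (Finset.univ.filter fun i : Fin p => (i : ℕ) < m ∧ N i J ≤ ξ J) := by
            intro x hx
            simp only [Finset.mem_filter, Finset.mem_union, Finset.mem_univ, true_and] at hx ⊢
            rcases le_total (ξ J) (N x J) with h | h
            · exact Or.inl ⟨hx, h⟩
            · exact Or.inr ⟨hx, h⟩
          have h1 := Finset.card_le_card hsub
          have h2 := Finset.card_union_le
            (Finset.univ.filter fun i : Fin p => (i : ℕ) < m ∧ ξ J ≤ N i J)
            (Finset.univ.filter fun i : Fin p => (i : ℕ) < m ∧ N i J ≤ ξ J)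
          rw [card_filter_lt p m (halveSeq_le p j)] at h1
          omega
    obtain ⟨N₁, hr1, hoth, hcard⟩ := key
    -- Step 2: sort block [0, m) by column J, descending
    set χ : ℕ → ℕ := fun i => if i < m then 0 else i + 1 with hχdef
    have hχmono : Monotone χ := by
      intro a b hab
      simp only [hχdef]
      split_ifs <;> omega
    obtain ⟨σ, hχσ, hsorted⟩ := sort_block χ hχmono (fun i => N₁ i J)
    have hfix : ∀ i : Fin p, m ≤ (i : ℕ) → σ i = i := by
      intro i hi
      have h := hχσ i
      simp only [hχdef] at h
      rw [if_neg (by omega : ¬ (i : ℕ) < m)] at h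
      by_cases h1 : ((σ i : Fin p) : ℕ) < m
      · rw [if_pos h1] at h; omega
      · rw [if_neg h1] at h; exact Fin.ext (by omega)
    have hblk : ∀ i : Fin p, (i : ℕ) < m → ((σ i : Fin p) : ℕ) < m := by
      intro i hi
      have h := hχσ i
      simp only [hχdef] at h
      rw [if_pos hi] at h
      by_cases h1 : ((σ i : Fin p) : ℕ) < m
      · exact h1
      · rw [if_neg h1] at h; omega
    have hblk' : ∀ i : Fin p, (i : ℕ) < m → ((σ.symm i : Fin p) : ℕ) < m := by
      intro i hi
      by_contra hc
      have h2 := hfix (σ.symm i) (le_of_not_gt hc)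
      rw [Equiv.apply_symm_apply] at h2
      rw [← h2] at hc
      exact hc hi
    set N₂ := rowPermEquiv p q σ.symm N₁ with hN₂def
    have hN₂ : ∀ (i : Fin p) (j' : Fin q), N₂ i j' = N₁ (σ i) j' := by
      intro i j'
      simp [hN₂def, rowPermEquiv]
    have hr2 : Reach p q ξ M N₂ := reach_trans hr1 (reach_rowPerm N₁ σ.symm)
    -- counting after sort
    have hcnt : (Finset.univ.filter fun i : Fin p => (i : ℕ) < m ∧ ξ J ≤ N₁ (σ i) J).card
        = (Finset.univ.filter fun i : Fin p => (i : ℕ) < m ∧ ξ J ≤ N₁ i J).card := by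
      refine Finset.card_nbij' (fun i => σ i) (fun i => σ.symm i) ?_ ?_ ?_ ?_
      · intro a ha
        simp only [Finset.mem_coe, Finset.mem_filter, Finset.mem_univ, true_and] at ha ⊢
        exact ⟨hblk a ha.1, ha.2⟩
      · intro a ha
        simp only [Finset.mem_coe, Finset.mem_filter, Finset.mem_univ, true_and] at ha ⊢
        refine ⟨hblk' a ha.1, ?_⟩
        rw [Equiv.apply_symm_apply]
        exact ha.2
      · intro a _
        simp [Equiv.symm_apply_apply]
      · intro a _
        simp [Equiv.apply_symm_apply]
    -- the new column constraint
    have hcol : ∀ i : Fin p, (i : ℕ) < t → ξ J ≤ N₂ i J := by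
      intro i hi
      rw [hN₂ i J]
      by_contra hcon
      have him : (i : ℕ) < m := by omega
      have hsub : (Finset.univ.filter fun x : Fin p => (x : ℕ) < m ∧ ξ J ≤ N₁ (σ x) J)
          ⊆ (Finset.univ.filter fun x : Fin p => (x : ℕ) < (i : ℕ)) := by
        intro x hx
        simp only [Finset.mem_filter, Finset.mem_univ, true_and] at hx ⊢
        obtain ⟨hxm, hxξ⟩ := hx
        by_contra hxi
        have hile : i ≤ x := by
          rw [Fin.le_def]; omega
        have hχeq2 : χ ((σ i : Fin p) : ℕ) = χ ((σ x : Fin p) : ℕ) := by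
          simp only [hχdef]
          rw [if_pos (hblk i him), if_pos (hblk x hxm)]
        have := hsorted i x hile hχeq2
        exact hcon (le_trans hxξ this)
      have hle := Finset.card_le_card hsub
      rw [card_filter_lt p (i : ℕ) (le_of_lt i.isLt)] at hle
      omega
    refine ⟨N₂, hr2, ?_⟩
    intro j' hj' i hi
    rcases Nat.lt_succ_iff_lt_or_eq.mp hj' with hlt | heq
    · have hne : j' ≠ J := by
        intro hq'
        rw [hq'] at hlt
        exact absurd rfl (ne_of_lt hlt)
      rw [hN₂ i j', hoth (σ i) j' hne]
      have hσi : ((σ i : Fin p) : ℕ) < halveSeq p ((j' : ℕ) + 1) := by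
        by_cases hcase : (i : ℕ) < m
        · have := hblk i hcase
          have hmle : m ≤ halveSeq p ((j' : ℕ) + 1) := halveSeq_antitone p (by omega)
          omega
        · rw [hfix i (le_of_not_gt hcase)]
          exact hi
      exact hN j' hlt (σ i) hσi
    · have hj'J : j' = J := Fin.ext heq
      subst hj'J
      exact hcol i hi

end Main

/-- Let `p, q ≥ 1`, `ξ ∈ ℝ^q`, `n₀ = p`, `n_j = ⌈n_{j−1}/2⌉`.
Let `G` be the group of bijections of `ℝ^{p×q}` generated by all row
permutations and all column reflections (at the centers `ξ_j`). Then every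
matrix `M` has a representative `N = g(M)`, `g ∈ G`, in its orbit satisfying:
(i) `N_{i,j} ≥ ξ_j` for every `j ∈ [q]` and every `i ∈ [n_j]`; and
(ii) within each of the row-index blocks `{1,…,n_q}` and
`{n_j + 1,…,n_{j−1}}` for `j ∈ [q]`, the rows of `N` are lexicographically
nonincreasing. -/
theorem row_and_column_reflection_handling (p q : ℕ) (hp : 0 < p) (hq : 0 < q)
    (ξ : Fin q → ℝ) (M : Matrix (Fin p) (Fin q) ℝ) :
    ∃ g ∈ Subgroup.closure
        (Set.range (rowPermEquiv p q) ∪ Set.range (colReflEquiv p q ξ)),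
      (∀ (j : Fin q) (i : Fin p),
        (i : ℕ) < halveSeq p ((j : ℕ) + 1) → ξ j ≤ g M i j) ∧
      (∀ (i : Fin p) (h : (i : ℕ) + 1 < p),
        ((i : ℕ) + 2 ≤ halveSeq p q ∨
          ∃ j : Fin q, halveSeq p ((j : ℕ) + 1) + 1 ≤ (i : ℕ) + 1 ∧
            (i : ℕ) + 2 ≤ halveSeq p (j : ℕ)) →
        geLex (g M i) (g M ⟨(i : ℕ) + 1, h⟩)) := by
  classical
  letI : LinearOrder (Lex (Fin q → ℝ)) := lexLO q
  obtain ⟨N, hNr, hN⟩ := stepA p q ξ M q le_rfl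
  have hNall : ∀ (j : Fin q) (i : Fin p), (i : ℕ) < halveSeq p ((j : ℕ) + 1) → ξ j ≤ N i j :=
    fun j i hi => hN j j.isLt i hi
  -- block index function
  set β : ℕ → ℕ := fun i => ((Finset.range (q + 1)).filter fun k => halveSeq p k ≤ i).card
    with hβdef
  have hβmono : Monotone β := by
    intro a b hab
    apply Finset.card_le_card
    intro k hk
    simp only [Finset.mem_filter] at hk ⊢
    exact ⟨hk.1, le_trans hk.2 hab⟩
  obtain ⟨σ, hχσ, hsorted⟩ := sort_block β hβmono (fun i => toLex (N i))
  set N₂ := rowPermEquiv p q σ.symm N with hN₂def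
  have hN₂ : ∀ (i : Fin p) (j : Fin q), N₂ i j = N (σ i) j := by
    intro i j
    simp [hN₂def, rowPermEquiv]
  have hN₂row : ∀ i : Fin p, N₂ i = N (σ i) := fun i => funext fun j => hN₂ i j
  have hr : Reach p q ξ M N₂ := reach_trans hNr (reach_rowPerm N σ.symm)
  obtain ⟨g, hg, hgM⟩ := hr
  refine ⟨g, hg, ?_, ?_⟩
  · -- (i)
    intro j i hi
    rw [hgM, hN₂ i j]
    have hσi : ((σ i : Fin p) : ℕ) < halveSeq p ((j : ℕ) + 1) := by
      by_contra hc
      push_neg at hc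
      have hss : (Finset.range (q + 1)).filter (fun k => halveSeq p k ≤ (i : ℕ))
          ⊆ (Finset.range (q + 1)).filter (fun k => halveSeq p k ≤ ((σ i : Fin p) : ℕ)) := by
        intro k hk
        simp only [Finset.mem_filter] at hk ⊢
        exact ⟨hk.1, by omega⟩
      have hlt : β (i : ℕ) < β ((σ i : Fin p) : ℕ) := by
        apply Finset.card_lt_card
        rw [Finset.ssubset_iff_of_subset hss]
        refine ⟨(j : ℕ) + 1, ?_, ?_⟩
        · simp only [Finset.mem_filter, Finset.mem_range]
          exact ⟨by omega, hc⟩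
        · simp only [Finset.mem_filter, Finset.mem_range]
          intro hmem
          omega
      have := hχσ i
      omega
    exact hNall j (σ i) hσi
  · -- (ii)
    intro i h hcond
    set b : Fin p := ⟨(i : ℕ) + 1, h⟩ with hb
    have hβeq : β (i : ℕ) = β ((i : ℕ) + 1) := by
      simp only [hβdef]
      congr 1
      apply Finset.filter_congr
      intro k hk
      simp only [Finset.mem_range] at hk
      constructor
      · intro h1; omega
      · intro h1
        by_contra h2
        have hkval : halveSeq p k = (i : ℕ) + 1 := by omega
        rcases hcond with hc | ⟨j, hj1, hj2⟩
        · have := halveSeq_antitone p (show k ≤ q by omega)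
          omega
        · rcases le_or_gt k (j : ℕ) with hkj | hkj
          · have := halveSeq_antitone p hkj
            omega
          · have := halveSeq_antitone p (show (j : ℕ) + 1 ≤ k by omega)
            omega
    have hle : i ≤ b := by rw [Fin.le_def]; simp [hb]
    have hχeq : β ((σ i : Fin p) : ℕ) = β ((σ b : Fin p) : ℕ) := by
      rw [hχσ i, hχσ b]
      simpa [hb] using hβeq
    have hlex := hsorted i b hle hχeq
    have hgl : geLex (N (σ i)) (N (σ b)) := by
      rcases eq_or_lt_of_le hlex with heq | hlt
      · exact Or.inl (toLex.injective heq).symm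
      · obtain ⟨k, h1, h2⟩ := hlt
        exact Or.inr ⟨k, fun l hl => (h1 l hl).symm, h2⟩
    rw [hgM, hN₂row i, hN₂row b]
    exact hgl
end

section
/- Let M ∈ ℝ^{p×q} and let x′ ∈ ℝ^{pq} be its column-major vectorization, i.e., x′_{(j−1)p+i} = M_{i,j}. For a permutation σ of [p], let σ·M denote the matrix with (σ·M)_{i,j} = M_{σ⁻¹(i),j}. Then the rows of M are sorted lexicographically, i.e., M_{1,·} ≥lex M_{2,·} ≥lex … ≥lex M_{p,·}, if and only if x′ ≥lex vec′(σ·M) for every permutation σ of [p], where vec′ denotes column-major vectorization. -/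
/-- Column-major vectorization of a `p × q` matrix: `x′_{(j−1)p+i} = M_{i,j}`
(0-indexed: entry `k` is `M_{k%p, k/p}`). -/
def vecCM {p q : ℕ} (hp : 0 < p) (M : Matrix (Fin p) (Fin q) ℝ) :
    Fin (p * q) → ℝ :=
  fun k => M ⟨(k : ℕ) % p, Nat.mod_lt _ hp⟩
             ⟨(k : ℕ) / p, Nat.div_lt_of_lt_mul k.isLt⟩

/-- The rows of `M` are sorted lexicographically:
`M_{1,·} ≥lex M_{2,·} ≥lex … ≥lex M_{p,·}`. -/
def RowsSorted {p q : ℕ} (M : Matrix (Fin p) (Fin q) ℝ) : Prop :=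
  ∀ (i : Fin p) (h : (i : ℕ) + 1 < p), geLex (M i) (M ⟨(i : ℕ) + 1, h⟩)

namespace RowsSortedAux

lemma lt_lex_iff {n : ℕ} (u v : Fin n → ℝ) :
    toLex u < toLex v ↔ ∃ k, (∀ l, l < k → u l = v l) ∧ u k < v k := Iff.rfl

lemma geLex_iff {n : ℕ} (u v : Fin n → ℝ) : geLex u v ↔ toLex v ≤ toLex u := by
  rw [le_iff_lt_or_eq]
  show geLex u v ↔ (∃ k, (∀ l, l < k → v l = u l) ∧ v k < u k) ∨ toLex v = toLex u
  constructor
  · rintro (h | ⟨k, h1, h2⟩)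
    · exact Or.inr (congrArg toLex h.symm)
    · exact Or.inl ⟨k, fun l hl => (h1 l hl).symm, h2⟩
  · rintro (⟨k, h1, h2⟩ | h)
    · exact Or.inr ⟨k, fun l hl => (h1 l hl).symm, h2⟩
    · exact Or.inl (toLex.injective h).symm

lemma geLex_total {n : ℕ} (u v : Fin n → ℝ) : geLex u v ∨ geLex v u := by
  rcases lt_trichotomy (toLex u) (toLex v) with h | h | h
  · obtain ⟨k, h1, h2⟩ := h
    exact Or.inr (Or.inr ⟨k, fun l hl => (h1 l hl).symm, h2⟩)
  · exact Or.inl (Or.inl h)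
  · obtain ⟨k, h1, h2⟩ := h
    exact Or.inl (Or.inr ⟨k, fun l hl => (h1 l hl).symm, h2⟩)

lemma lt_of_not_geLex {n : ℕ} {u v : Fin n → ℝ} (h : ¬ geLex u v) :
    ∃ k, (∀ l, l < k → u l = v l) ∧ u k < v k := by
  rcases geLex_total u v with h' | h'
  · exact absurd h' h
  · rcases h' with heq | ⟨k, h1, h2⟩
    · exact absurd (Or.inl heq.symm) h
    · exact ⟨k, fun l hl => (h1 l hl).symm, h2⟩

lemma geLex_asymm {n : ℕ} {u v : Fin n → ℝ} (h : geLex u v) (k : Fin n)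
    (h1 : ∀ l, l < k → u l = v l) (h2 : u k < v k) : False := by
  rcases h with heq | ⟨k', g1, g2⟩
  · rw [heq] at h2; exact lt_irrefl _ h2
  · rcases lt_trichotomy k k' with hk | hk | hk
    · exact absurd (g1 k hk) (ne_of_lt h2)
    · rw [hk] at h2; exact lt_asymm h2 g2
    · exact absurd (h1 k' hk) (ne_of_gt g2)

lemma idx_bound {a b p q : ℕ} (ha : a < p) (hb : b < q) : a + b * p < p * q := by
  have h1 : a + b * p < (b + 1) * p := by rw [Nat.succ_mul]; linarith
  have h2 : (b + 1) * p ≤ q * p := Nat.mul_le_mul_right p hb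
  rw [Nat.mul_comm q p] at h2
  linarith

lemma idx_lt {a b r c p : ℕ} (ha : a < p) (h : b < c ∨ (b = c ∧ a < r)) :
    a + b * p < r + c * p := by
  rcases h with h | ⟨rfl, h⟩
  · have h1 : a + b * p < (b + 1) * p := by rw [Nat.succ_mul]; linarith
    have h2 : (b + 1) * p ≤ c * p := Nat.mul_le_mul_right p h
    linarith
  · linarith

lemma idx_lt_inv {a b i j p : ℕ} (hi : i < p) (h : a + b * p < i + j * p) :
    b < j ∨ (b = j ∧ a < i) := by
  rcases Nat.lt_or_ge b j with hb | hb
  · exact Or.inl hb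
  · rcases Nat.eq_or_lt_of_le hb with heq | hlt
    · subst heq; exact Or.inr ⟨rfl, by linarith⟩
    · exfalso
      have h1 : (j + 1) * p ≤ b * p := Nat.mul_le_mul_right p hlt
      rw [Nat.succ_mul] at h1
      linarith

lemma vecCM_mk {p q : ℕ} (hp : 0 < p) (M : Matrix (Fin p) (Fin q) ℝ)
    (a : Fin p) (b : Fin q) :
    vecCM hp M ⟨a.1 + b.1 * p, idx_bound a.2 b.2⟩ = M a b := by
  show M _ _ = M a b
  congr 1
  · exact Fin.ext (by simp [Nat.add_mul_mod_self_right, Nat.mod_eq_of_lt a.2])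
  · exact Fin.ext (by simp [Nat.add_mul_div_right _ _ hp, Nat.div_eq_of_lt a.2])

lemma sorted_le {p q : ℕ} {M : Matrix (Fin p) (Fin q) ℝ} (hs : RowsSorted M) :
    ∀ (d : ℕ) (i : Fin p) (h : i.1 + d < p), toLex (M ⟨i.1 + d, h⟩) ≤ toLex (M i) := by
  intro d
  induction d with
  | zero =>
      intro i h
      exact le_of_eq (congrArg toLex (congrArg M (Fin.ext (Nat.add_zero _))))
  | succ d ih =>
      intro i h
      have h' : i.1 + d < p := by omega
      have h1 : geLex (M ⟨i.1 + d, h'⟩) (M ⟨i.1 + d + 1, h⟩) := hs ⟨i.1 + d, h'⟩ h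
      exact le_trans ((geLex_iff _ _).1 h1) (ih i h')

lemma sorted_le' {p q : ℕ} {M : Matrix (Fin p) (Fin q) ℝ} (hs : RowsSorted M)
    {i j : Fin p} (hij : i ≤ j) : toLex (M j) ≤ toLex (M i) := by
  obtain ⟨d, hd⟩ : ∃ d, j.1 = i.1 + d := ⟨j.1 - i.1, by omega⟩
  have hj : j = ⟨i.1 + d, hd ▸ j.2⟩ := Fin.ext hd
  rw [hj]
  exact sorted_le hs d i _

lemma trunc_le {n : ℕ} {u v : Fin n → ℝ} (c : ℕ) (h : toLex u ≤ toLex v) :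
    toLex (fun b : Fin n => if (b : ℕ) ≤ c then u b else 0) ≤
      toLex (fun b : Fin n => if (b : ℕ) ≤ c then v b else 0) := by
  rcases lt_or_eq_of_le h with h | h
  · obtain ⟨j, h1, h2⟩ := h
    by_cases hj : (j : ℕ) ≤ c
    · refine le_of_lt ⟨j, fun l hl => ?_, ?_⟩
      · show (if (l : ℕ) ≤ c then u l else 0) = (if (l : ℕ) ≤ c then v l else 0)
        have huv : u l = v l := h1 l hl
        rw [huv]
      · show (if (j : ℕ) ≤ c then u j else 0) < (if (j : ℕ) ≤ c then v j else 0)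
        rw [if_pos hj, if_pos hj]; exact h2
    · refine le_of_eq (congrArg toLex ?_)
      funext b
      by_cases hb : (b : ℕ) ≤ c
      · have hbj : b < j := by rw [Fin.lt_def]; omega
        have huv : u b = v b := h1 b hbj
        rw [huv]
      · simp [hb]
  · exact le_of_eq (congrArg toLex (by rw [toLex.injective h]))

end RowsSortedAux

open RowsSortedAux in
/-- Let `x′` be the column-major vectorization of
`M ∈ ℝ^{p×q}`. Then the rows of `M` are sorted lexicographically if and only if
`x′ ≥lex vec′(σ·M)` for every permutation `σ` of `[p]`, where
`(σ·M)_{i,j} = M_{σ⁻¹(i),j}`. -/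
theorem rows_sorted_iff_lex_colmajor (p q : ℕ) (hp : 0 < p)
    (M : Matrix (Fin p) (Fin q) ℝ) :
    RowsSorted M ↔
      ∀ σ : Equiv.Perm (Fin p),
        geLex (vecCM hp M) (vecCM hp (Matrix.of fun i j => M (σ.symm i) j)) := by
  classical
  constructor
  · intro hs σ
    by_contra hg
    obtain ⟨k, hpre, hk⟩ := lt_of_not_geLex hg
    set r : Fin p := ⟨(k : ℕ) % p, Nat.mod_lt _ hp⟩ with hr
    set c : Fin q := ⟨(k : ℕ) / p, Nat.div_lt_of_lt_mul k.isLt⟩ with hc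
    have hk' : M r c < M (σ.symm r) c := hk
    have hkeq : (k : ℕ) = r.1 + c.1 * p := (Nat.mod_add_div' k.1 p).symm
    have hpre' : ∀ (a : Fin p) (b : Fin q), (b.1 < c.1 ∨ (b.1 = c.1 ∧ a.1 < r.1)) →
        M a b = M (σ.symm a) b := by
      intro a b hcond
      have hlk : (⟨a.1 + b.1 * p, idx_bound a.2 b.2⟩ : Fin (p * q)) < k := by
        rw [Fin.lt_def]; exact hkeq ▸ idx_lt a.2 hcond
      have h := hpre _ hlk
      rwa [vecCM_mk, vecCM_mk] at h
    set T : Fin p → Fin q → ℝ := fun a b => if (b : ℕ) ≤ c.1 then M a b else 0 with hT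
    have hTs : ∀ {i j : Fin p}, i ≤ j → toLex (T j) ≤ toLex (T i) :=
      fun hij => trunc_le c.1 (sorted_le' hs hij)
    have hTfix : ∀ a : Fin p, a.1 < r.1 → T (σ.symm a) = T a := by
      intro a ha
      funext b
      simp only [hT]
      by_cases hb : (b : ℕ) ≤ c.1
      · rw [if_pos hb, if_pos hb]
        rcases Nat.lt_or_ge b.1 c.1 with hbc | hbc
        · exact (hpre' a b (Or.inl hbc)).symm
        · exact (hpre' a b (Or.inr ⟨le_antisymm hb hbc, ha⟩)).symm
      · rw [if_neg hb, if_neg hb]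
    have hsA : toLex (T r) < toLex (T (σ.symm r)) := by
      refine ⟨c, fun b hb => ?_, ?_⟩
      · have hb' : b.1 < c.1 := hb
        show (if (b : ℕ) ≤ c.1 then M r b else 0) =
          (if (b : ℕ) ≤ c.1 then M (σ.symm r) b else 0)
        rw [if_pos hb'.le, if_pos hb'.le]
        exact hpre' r b (Or.inl hb')
      · show (if (c : ℕ) ≤ c.1 then M r c else 0) <
          (if (c : ℕ) ≤ c.1 then M (σ.symm r) c else 0)
        rw [if_pos le_rfl, if_pos le_rfl]
        exact hk'
    set A : Finset (Fin p) := Finset.univ.filter (fun j => toLex (T r) < toLex (T j)) with hA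
    have hrA : r ∉ A := fun hmem => by
      have : toLex (T r) < toLex (T r) := by simpa [hA] using hmem
      exact lt_irrefl _ this
    have hmap : ∀ i ∈ insert r A, σ.symm i ∈ A := by
      intro i hi
      rcases Finset.mem_insert.mp hi with rfl | hiA
      · simp only [hA, Finset.mem_filter, Finset.mem_univ, true_and]
        exact hsA
      · have hTi : toLex (T r) < toLex (T i) := by
          simpa [hA] using hiA
        have hir : i.1 < r.1 := by
          by_contra hge
          have hri : r ≤ i := by rw [Fin.le_def]; omega
          exact absurd (hTs hri) hTi.not_ge
        simp only [hA, Finset.mem_filter, Finset.mem_univ, true_and]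
        rw [hTfix i hir]
        exact hTi
    have hsub : (insert r A).image σ.symm ⊆ A := by
      intro x hx
      obtain ⟨i, hi, rfl⟩ := Finset.mem_image.mp hx
      exact hmap i hi
    have h1 : (insert r A).card = A.card + 1 := Finset.card_insert_of_notMem hrA
    have h2 : ((insert r A).image σ.symm).card = (insert r A).card :=
      Finset.card_image_of_injective _ σ.symm.injective
    have h3 := Finset.card_le_card hsub
    omega
  · intro h i hi1
    by_contra hns
    obtain ⟨j, hj1, hj2⟩ := lt_of_not_geLex hns
    set i1 : Fin p := ⟨i.1 + 1, hi1⟩ with hi1'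
    set σ := Equiv.swap i i1 with hσ
    have hσs := h σ
    have hswap : ∀ a : Fin p, σ.symm a = Equiv.swap i i1 a := by
      intro a; rw [hσ, Equiv.symm_swap]
    refine geLex_asymm hσs ⟨i.1 + j.1 * p, idx_bound i.2 j.2⟩ (fun l hl => ?_) ?_
    · obtain ⟨a, b, hab1, hab2, hcond⟩ : ∃ (a : Fin p) (b : Fin q),
          vecCM hp M l = M a b ∧
          vecCM hp (Matrix.of fun x y => M (σ.symm x) y) l = M (σ.symm a) b ∧
          (b.1 < j.1 ∨ (b.1 = j.1 ∧ a.1 < i.1)) := by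
        refine ⟨⟨(l : ℕ) % p, Nat.mod_lt _ hp⟩, ⟨(l : ℕ) / p, Nat.div_lt_of_lt_mul l.isLt⟩,
          rfl, rfl, ?_⟩
        refine idx_lt_inv i.2 ?_
        show (l : ℕ) % p + (l : ℕ) / p * p < i.1 + j.1 * p
        rw [Nat.mod_add_div']
        exact hl
      rw [hab1, hab2, hswap a]
      rcases eq_or_ne a i with heq | hai
      · rw [heq, Equiv.swap_apply_left]
        rcases hcond with hbj | ⟨_, hlt⟩
        · exact hj1 b hbj
        · rw [heq] at hlt; exact absurd hlt (lt_irrefl _)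
      · rcases eq_or_ne a i1 with heq1 | hai1
        · rw [heq1, Equiv.swap_apply_right]
          rcases hcond with hbj | ⟨_, hlt⟩
          · exact (hj1 b hbj).symm
          · exfalso; rw [heq1, hi1'] at hlt; simp at hlt
        · rw [Equiv.swap_apply_of_ne_of_ne hai hai1]
    · show vecCM hp M _ < vecCM hp (Matrix.of fun x y => M (σ.symm x) y) _
      rw [vecCM_mk, vecCM_mk]
      show M i j < M (σ.symm i) j
      rw [hswap i, Equiv.swap_apply_left]
      exact hj2
end
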